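/- arXiv:1707.06309 — 2 statements merged into one kernel-verified Lean document; each statement's English description precedes it below -/
import Mathlib

section
/- For ν > 0, natural m, and z ∈ ℂ: ∑_{n=0}^∞ |H_{m,n}^ν(z, z̄)|² / (n! νⁿ) = m! ν^m exp(ν |z|²). -/
noncomputable def complexHermite (ν : ℝ) (m n : ℕ) (z w : ℂ) : ℂ :=
  (-1)^(m+n) * Complex.exp ((ν : ℂ) * z * w) *
    iteratedDeriv m (fun w' => iteratedDeriv n (fun z' => Complex.exp (-(ν : ℂ) * z' * w')) z) w

/-!
Since `∂_z^n e^{-νzw} = (-νw)^n e^{-νzw}`, we have `H_{m,n} = (-1)^m νⁿ e^{νzw} ∂_w^m (wⁿ e^{-νzw})`.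
Differentiating `wⁿ e^{-νzw}` once, resp. applying the Leibniz rule to `w · wⁿ e^{-νzw}`, gives
`H_{m+1,n} = νz H_{m,n} - νn H_{m,n-1}` and `H_{m,n+1} = νw H_{m,n} - νm H_{m-1,n}`.
These recurrences imply `H_{m,n}(z,w) = H_{n,m}(w,z)` and `conj H_{m,n}(z,w) = H_{m,n}(z̄,w̄)`,
so that `|H_{m,n}(z,z̄)|² = H_{m,n}(z,z̄) H_{n,m}(z,z̄)`.

For arbitrary `z, w` put `S_{m,m'} = ∑ₙ H_{m,n} H_{n,m'} / (n! νⁿ)`. Applying the first recurrence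
to both factors and shifting `n` by one, the `νz`-terms telescope and `S_{m+1,m'} = νm' S_{m,m'-1}`;
moreover `S_{0,0} = ∑ₙ (νzw)ⁿ / n! = e^{νzw}`. Hence `S_{m,m'} = δ_{mm'} m! ν^m e^{νzw}`, and
`w = z̄` is the theorem.
-/

open Complex ComplexConjugate
open scoped Nat

lemma iteratedDeriv_id_mul {𝕜 : Type*} [NontriviallyNormedField 𝕜] {f : 𝕜 → 𝕜} {m : ℕ}
    {x : 𝕜} (hf : ContDiffAt 𝕜 m f x) :
    iteratedDeriv m (fun y => y * f y) x
      = x * iteratedDeriv m f x + m * iteratedDeriv (m - 1) f x := by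
  rw [iteratedDeriv_fun_mul (f := fun y => y) contDiffAt_fun_id hf]
  rcases m with _ | m
  · simp
  · rw [Finset.sum_range_succ', Finset.sum_range_succ', Finset.sum_eq_zero]
    · simp only [zero_add, Nat.choose_one_right, Nat.cast_add, Nat.cast_one, iteratedDeriv_fun_id,
        one_ne_zero, ↓reduceIte, mul_one, add_tsub_cancel_right, Nat.choose_zero_right, one_mul,
        tsub_zero]
      ring
    · intro i _
      simp [iteratedDeriv_fun_id]

lemma iteratedDeriv_succ_pow_mul_cexp (c : ℂ) (m n : ℕ) (x : ℂ) :
    iteratedDeriv (m + 1) (fun y => y ^ n * exp (c * y)) x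
      = n * iteratedDeriv m (fun y => y ^ (n - 1) * exp (c * y)) x
        + c * iteratedDeriv m (fun y => y ^ n * exp (c * y)) x := by
  have hderiv : deriv (fun y => y ^ n * exp (c * y))
      = fun y => n * (y ^ (n - 1) * exp (c * y)) + c * (y ^ n * exp (c * y)) := by
    funext y
    rw [((hasDerivAt_pow n y).fun_mul ((hasDerivAt_id' y).const_mul c).cexp).deriv]
    ring
  rw [iteratedDeriv_succ', hderiv, iteratedDeriv_fun_add (by fun_prop) (by fun_prop),
    iteratedDeriv_const_mul_field, iteratedDeriv_const_mul_field]

lemma iteratedDeriv_pow_succ_mul_cexp (c : ℂ) (m n : ℕ) (x : ℂ) :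
    iteratedDeriv m (fun y => y ^ (n + 1) * exp (c * y)) x
      = x * iteratedDeriv m (fun y => y ^ n * exp (c * y)) x
        + m * iteratedDeriv (m - 1) (fun y => y ^ n * exp (c * y)) x := by
  simp_rw [pow_succ', mul_assoc]
  exact iteratedDeriv_id_mul (by fun_prop)

section complexHermite

variable (ν : ℝ)

lemma complexHermite_eq_iteratedDeriv (m n : ℕ) (z w : ℂ) :
    complexHermite ν m n z w = (-1) ^ m * ν ^ n * exp (ν * z * w) *
      iteratedDeriv m (fun y => y ^ n * exp (-(ν * z) * y)) w := by
  have hinner : (fun w' => iteratedDeriv n (fun z' => exp (-ν * z' * w')) z)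
      = fun w' => (-1) ^ n * ν ^ n * (w' ^ n * exp (-(ν * z) * w')) := by
    funext w'
    simp_rw [show ∀ z', -(ν : ℂ) * z' * w' = (-ν * w') * z' from fun z' => by ring,
      iteratedDeriv_cexp_const_mul]
    ring_nf
  have hsign : ((-1 : ℂ) ^ n) ^ 2 = 1 := by rw [← pow_mul', pow_mul, neg_one_sq, one_pow]
  rw [complexHermite, hinner, iteratedDeriv_const_mul_field, pow_add]
  linear_combination (-1) ^ m * ν ^ n * exp (ν * z * w) *
      iteratedDeriv m (fun y => y ^ n * exp (-(ν * z) * y)) w * hsign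

lemma complexHermite_zero_left (n : ℕ) (z w : ℂ) : complexHermite ν 0 n z w = (ν * w) ^ n := by
  rw [complexHermite_eq_iteratedDeriv, iteratedDeriv_zero, mul_pow]
  have : exp (ν * z * w) * exp (-(ν * z) * w) = 1 := by rw [← exp_add]; ring_nf; exact exp_zero
  linear_combination ν ^ n * w ^ n * this

lemma complexHermite_succ_left (m n : ℕ) (z w : ℂ) :
    complexHermite ν (m + 1) n z w
      = ν * z * complexHermite ν m n z w - ν * n * complexHermite ν m (n - 1) z w := by
  simp only [complexHermite_eq_iteratedDeriv, iteratedDeriv_succ_pow_mul_cexp]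
  rcases n with _ | n
  · push_cast; ring
  · simp only [add_tsub_cancel_right, pow_succ]; push_cast; ring

lemma complexHermite_succ_right (m n : ℕ) (z w : ℂ) :
    complexHermite ν m (n + 1) z w
      = ν * w * complexHermite ν m n z w - ν * m * complexHermite ν (m - 1) n z w := by
  simp only [complexHermite_eq_iteratedDeriv, iteratedDeriv_pow_succ_mul_cexp]
  rcases m with _ | m
  · push_cast; ring
  · simp only [add_tsub_cancel_right, pow_succ]; push_cast; ring

lemma complexHermite_zero_right (m : ℕ) (z w : ℂ) : complexHermite ν m 0 z w = (ν * z) ^ m := by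
  induction m with
  | zero => simp [complexHermite_zero_left]
  | succ m ih => rw [complexHermite_succ_left, ih]; push_cast; ring

lemma complexHermite_swap (m n : ℕ) (z w : ℂ) :
    complexHermite ν m n z w = complexHermite ν n m w z := by
  induction m generalizing n with
  | zero => rw [complexHermite_zero_left, complexHermite_zero_right]
  | succ m ih => rw [complexHermite_succ_left, complexHermite_succ_right, ih, ih]

lemma conj_complexHermite (m n : ℕ) (z w : ℂ) :
    conj (complexHermite ν m n z w) = complexHermite ν m n (conj z) (conj w) := by
  induction m generalizing n with
  | zero => simp [complexHermite_zero_left]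
  | succ m ih => simp [complexHermite_succ_left, ih]

lemma complexHermite_swap_conj (m n : ℕ) (z : ℂ) :
    complexHermite ν n m z (conj z) = conj (complexHermite ν m n z (conj z)) := by
  rw [conj_complexHermite, conj_conj, complexHermite_swap]

end complexHermite

section orthogonality

variable {ν : ℝ} (z w : ℂ)

lemma hasSum_complexHermite_mul_succ_left (hν : ν ≠ 0) {m m' : ℕ} {B : ℂ}
    (hsum : Summable fun n => complexHermite ν m n z w * complexHermite ν n m' z w / (n ! * ν ^ n))
    (hB : HasSum (fun n => complexHermite ν m n z w * complexHermite ν n (m' - 1) z w /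
      (n ! * ν ^ n)) B) :
    HasSum (fun n => complexHermite ν (m + 1) n z w * complexHermite ν n m' z w / (n ! * ν ^ n))
      (ν * m' * B) := by
  obtain ⟨T, hT⟩ := hsum
  set t := fun n : ℕ => complexHermite ν m n z w * complexHermite ν n m' z w / (n ! * ν ^ n)
  have hshift : ∀ k : ℕ,
      complexHermite ν (m + 1) (k + 1) z w * complexHermite ν (k + 1) m' z w /
          ((k + 1)! * ν ^ (k + 1)) - ν * z * t (k + 1)
        = ν * m' * (complexHermite ν m k z w * complexHermite ν k (m' - 1) z w / (k ! * ν ^ k))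
          - ν * z * t k := by
    intro k
    have hν' : (ν : ℂ) ≠ 0 := ofReal_ne_zero.mpr hν
    simp only [t, complexHermite_succ_left ν m (k + 1), complexHermite_succ_left ν k m',
      add_tsub_cancel_right, Nat.factorial_succ]
    push_cast
    field_simp
    ring
  have hrest : HasSum (fun n => complexHermite ν (m + 1) n z w * complexHermite ν n m' z w /
      (n ! * ν ^ n) - ν * z * t n) (ν * m' * B - ν * z * T) := by
    rw [← hasSum_nat_add_iff' 1, Finset.sum_range_one]
    convert (hB.mul_left ((ν : ℂ) * m')).sub (hT.mul_left (ν * z)) using 1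
    · exact funext hshift
    · simp [t, complexHermite_succ_left ν m 0, mul_assoc]
  convert hrest.add (hT.mul_left (ν * z)) using 1
  · funext n; ring
  · ring

lemma hasSum_complexHermite_zero_mul_zero (hν : ν ≠ 0) :
    HasSum (fun n => complexHermite ν 0 n z w * complexHermite ν n 0 z w / (n ! * ν ^ n))
      (exp (ν * z * w)) := by
  suffices hterm : ∀ n : ℕ, complexHermite ν 0 n z w * complexHermite ν n 0 z w / (n ! * ν ^ n)
      = (ν * z * w) ^ n / (n ! : ℂ) by
    simpa only [hterm, ← Complex.exp_eq_exp_ℂ] using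
      NormedSpace.expSeries_div_hasSum_exp ((ν : ℂ) * z * w)
  intro n
  have hν' : (ν : ℂ) ≠ 0 := ofReal_ne_zero.mpr hν
  rw [complexHermite_zero_left, complexHermite_zero_right]
  field_simp
  ring

lemma hasSum_complexHermite_mul_zero (hν : ν ≠ 0) (m : ℕ) :
    HasSum (fun n => complexHermite ν m n z w * complexHermite ν n 0 z w / (n ! * ν ^ n))
      (if m = 0 then exp (ν * z * w) else 0) := by
  induction m with
  | zero => simpa using hasSum_complexHermite_zero_mul_zero z w hν
  | succ m ih => simpa using hasSum_complexHermite_mul_succ_left z w hν ih.summable ih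

lemma hasSum_complexHermite_zero_mul (hν : ν ≠ 0) (m' : ℕ) :
    HasSum (fun n => complexHermite ν 0 n z w * complexHermite ν n m' z w / (n ! * ν ^ n))
      (if 0 = m' then exp (ν * z * w) else 0) := by
  convert hasSum_complexHermite_mul_zero w z hν m' using 1
  · funext n
    rw [complexHermite_swap ν 0, complexHermite_swap ν n m', mul_comm (complexHermite ν n 0 w z)]
  · simp [eq_comm, mul_right_comm]

theorem hasSum_complexHermite_mul (hν : ν ≠ 0) (m m' : ℕ) :
    HasSum (fun n => complexHermite ν m n z w * complexHermite ν n m' z w / (n ! * ν ^ n))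
      (if m = m' then m ! * ν ^ m * exp (ν * z * w) else 0) := by
  induction m generalizing m' with
  | zero => simpa using hasSum_complexHermite_zero_mul z w hν m'
  | succ m ih =>
    convert hasSum_complexHermite_mul_succ_left z w hν (ih m').summable (ih (m' - 1)) using 1
    rcases m' with _ | m'
    · simp
    · simp only [add_tsub_cancel_right, add_left_inj]
      split_ifs
      · subst m'
        push_cast [Nat.factorial_succ]
        ring
      · simp

end orthogonality

theorem complexHermite_norm_sum (ν : ℝ) (hν : 0 < ν) (m : ℕ) (z : ℂ) :
    HasSum (fun n : ℕ => ‖complexHermite ν m n z (starRingEnd ℂ z)‖^2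
        / ((n.factorial : ℝ) * ν^n))
      ((m.factorial : ℝ) * ν^m * Real.exp (ν * Complex.normSq z)) := by
  have h := hasSum_complexHermite_mul z (conj z) hν.ne' m m
  rw [if_pos rfl] at h
  rw [← hasSum_ofReal]
  convert h using 1
  · funext n
    rw [complexHermite_swap_conj ν m n, mul_conj, normSq_eq_norm_sq]
    push_cast
    ring
  · rw [mul_assoc (ν : ℂ), mul_conj]
    push_cast
    ring
end

section
/- The squared L² norm of the complex Hermite polynomial with respect to the Gaussian measure is ∫_ℂ |H_{m,n}^ν(z, z̄)|² e^{-ν|z|²} dλ(z) = (π/ν) m! n! ν^{m+n} for all naturals m, n and ν > 0. Moreover, H_{m,n}^ν and H_{m',n'}^ν are orthogonal in L²(ℂ, e^{-ν|z|²}dλ) whenever (m, n) ≠ (m', n'). -/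
open Finset Complex MeasureTheory Nat fwdDiff
open scoped Real ComplexConjugate

theorem descFactorial_mul_factorial_sub (n a k : ℕ) (hk : k ≤ n + a) :
    n.descFactorial k * (n + a - k)! = n ! * (n + a - k).descFactorial a := by
  rcases le_or_gt k n with hkn | hnk
  · obtain ⟨j, rfl⟩ := Nat.exists_eq_add_of_le hkn
    have hj : k + j + a - k = j + a := by omega
    rw [hj, ← factorial_mul_descFactorial (Nat.le_add_left a j), Nat.add_sub_cancel,
      ← factorial_mul_descFactorial (Nat.le_add_right k j), Nat.add_sub_cancel_left]
    ring
  · rw [descFactorial_eq_zero_iff_lt.2 hnk, descFactorial_eq_zero_iff_lt.2 (by omega)]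
    simp

theorem sum_alternating_choose_descFactorial_mul_factorial (m n a : ℕ) (h : m ≤ n + a) :
    ∑ k ∈ range (m + 1), (-1 : ℤ) ^ k * m.choose k * n.descFactorial k * (n + a - k)! =
      n ! * (Δ_[1])^[m] (descPochhammer ℤ a).eval ((n + a - m : ℕ) : ℤ) := by
  rw [fwdDiff_iter_eq_sum_shift, mul_sum, ← sum_range_reflect]
  refine sum_congr rfl fun j hj => ?_
  have hjm : j ≤ m := Nat.lt_succ_iff.1 (mem_range.1 hj)
  have hcast : ((n + a - m : ℕ) : ℤ) + j • (1 : ℤ) = ((n + a - (m - j) : ℕ) : ℤ) := by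
    rw [nsmul_eq_mul, mul_one]; omega
  rw [Nat.add_sub_cancel, hcast, descPochhammer_eval_eq_descFactorial, choose_symm hjm,
    mul_assoc _ _ ((n + a - (m - j))! : ℤ), ← Nat.cast_mul,
    descFactorial_mul_factorial_sub n a _ (by omega), smul_eq_mul]
  push_cast
  ring

theorem sum_alternating_choose_descFactorial_mul_factorial_of_lt {m n a : ℕ}
    (hm : m ≤ n + a) (h : a < m) :
    ∑ k ∈ range (m + 1), (-1 : ℤ) ^ k * m.choose k * n.descFactorial k * (n + a - k)! = 0 := by
  rw [sum_alternating_choose_descFactorial_mul_factorial m n a hm,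
    Polynomial.fwdDiff_iter_eq_zero_of_degree_lt (by rwa [descPochhammer_natDegree]),
    Pi.zero_apply, mul_zero]

theorem sum_alternating_choose_descFactorial_mul_factorial_self (m n : ℕ) :
    ∑ k ∈ range (m + 1), (-1 : ℤ) ^ k * m.choose k * n.descFactorial k * (n + m - k)! =
      n ! * m ! := by
  have h := (descPochhammer ℤ m).fwdDiff_iter_degree_eq_factorial
  rw [descPochhammer_natDegree, (monic_descPochhammer ℤ m).leadingCoeff, one_smul] at h
  rw [sum_alternating_choose_descFactorial_mul_factorial m n m (by omega), h]
  simp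

noncomputable def complexHermiteCoeff (ν : ℝ) (m n k : ℕ) : ℝ :=
  (-1) ^ k * m.choose k * n.descFactorial k * ν ^ (m + n - k)

theorem complexHermite_eq_sum (ν : ℝ) (m n : ℕ) (z w : ℂ) :
    complexHermite ν m n z w =
      ∑ k ∈ range (m + 1), (complexHermiteCoeff ν m n k : ℂ) * z ^ (m - k) * w ^ (n - k) := by
  have hinner (w' : ℂ) : iteratedDeriv n (fun z' => cexp (-ν * z' * w')) z =
      (-ν : ℂ) ^ n * (w' ^ n * cexp (-ν * z * w')) := by
    simp_rw [show ∀ z', -(ν : ℂ) * z' * w' = -ν * w' * z' from fun _ => by ring,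
      iteratedDeriv_cexp_const_mul]
    ring
  simp_rw [complexHermite, hinner, iteratedDeriv_const_mul_field]
  rw [iteratedDeriv_fun_mul (by fun_prop) (by fun_prop)]
  simp only [iteratedDeriv_pow, iteratedDeriv_cexp_const_mul, mul_sum]
  refine sum_congr rfl fun k hk => ?_
  obtain ⟨j, rfl⟩ := Nat.exists_eq_add_of_le (Nat.lt_succ_iff.1 (mem_range.1 hk))
  have hexp : cexp (ν * z * w) * cexp (-ν * z * w) = 1 := by
    rw [← Complex.exp_add]; ring_nf; exact Complex.exp_zero
  have hsign : (-1 : ℂ) ^ (k + j + n) * (-1) ^ n * (-1) ^ j = (-1) ^ k := by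
    rw [← pow_add, ← pow_add, show k + j + n + n + j = k + 2 * (j + n) by ring, pow_add,
      pow_mul]
    simp
  simp only [complexHermiteCoeff, Nat.add_sub_cancel_left, show k + j + n - k = j + n by omega]
  push_cast
  linear_combination (↑((k + j).choose k) * ↑(n.descFactorial k) * (ν : ℂ) ^ (j + n) *
    z ^ j * w ^ (n - k)) * ((-1) ^ (k + j + n) * (-1) ^ n * (-1) ^ j * hexp + hsign)

theorem integral_pow_mul_conj_pow_mul_radial_of_ne {p q : ℕ} (hpq : p ≠ q) (g : ℝ → ℂ) :
    ∫ z : ℂ, z ^ p * conj z ^ q * g (normSq z) = 0 := by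
  set ω := Circle.exp (π / ((p : ℝ) - q))
  have hω : (ω : ℂ) ^ p * conj (ω : ℂ) ^ q = -1 := by
    have hpq' : ((p : ℂ) - q) ≠ 0 := sub_ne_zero.2 (Nat.cast_injective.ne hpq)
    rw [Circle.coe_exp, ← Complex.exp_conj, ← Complex.exp_nat_mul, ← Complex.exp_nat_mul,
      ← Complex.exp_add, map_mul, conj_ofReal, conj_I,
      show (p : ℂ) * (↑(π / ((p : ℝ) - q)) * I) + q * (↑(π / ((p : ℝ) - q)) * -I) = π * I by
        push_cast; field_simp; ring, exp_pi_mul_I]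
  have hrot (z : ℂ) : (ω * z) ^ p * conj (ω * z) ^ q * g (normSq (ω * z)) =
      -(z ^ p * conj z ^ q * g (normSq z)) := by
    rw [normSq_mul, Circle.normSq_coe, one_mul, map_mul, mul_pow, mul_pow, ← neg_one_mul, ← hω]
    ring
  have h := (rotation ω).measurePreserving.integral_comp
    (rotation ω).toHomeomorph.measurableEmbedding (fun z => z ^ p * conj z ^ q * g (normSq z))
  simp only [rotation_apply, hrot, integral_neg] at h
  exact CharZero.neg_eq_self_iff.1 h

theorem cexp_neg_mul_normSq_eq_ofReal (ν : ℝ) (z : ℂ) :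
    cexp (-ν * normSq z) = (Real.exp (-ν * ‖z‖ ^ 2) : ℂ) := by
  rw [normSq_eq_norm_sq]
  push_cast
  rfl

theorem integral_pow_mul_conj_pow_mul_gaussian_self {ν : ℝ} (hν : 0 < ν) (p : ℕ) :
    ∫ z : ℂ, z ^ p * conj z ^ p * cexp (-ν * normSq z) = π * p ! / ν ^ (p + 1) := by
  have hpt (z : ℂ) : z ^ p * conj z ^ p * cexp (-ν * normSq z) =
      ((‖z‖ ^ ((2 * p : ℕ) : ℝ) * Real.exp (-ν * ‖z‖ ^ (2 : ℝ)) : ℝ) : ℂ) := by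
    rw [← mul_pow, mul_conj, cexp_neg_mul_normSq_eq_ofReal, normSq_eq_norm_sq,
      Real.rpow_natCast, Real.rpow_two, pow_mul]
    push_cast
    rfl
  have hexp : (-((2 * p : ℕ) + 2) / 2 : ℝ) = -((p + 1 : ℕ) : ℝ) := by push_cast; ring
  have hgam : (((2 * p : ℕ) + 2) / 2 : ℝ) = p + 1 := by push_cast; ring
  simp_rw [hpt, integral_complex_ofReal]
  rw [Complex.integral_rpow_mul_exp_neg_mul_rpow one_le_two
    (by linarith [(2 * p : ℕ).cast_nonneg (α := ℝ)]) hν, hexp, hgam,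
    Real.Gamma_nat_eq_factorial, Real.rpow_neg hν.le, Real.rpow_natCast]
  push_cast
  field_simp

theorem integral_pow_mul_conj_pow_mul_gaussian {ν : ℝ} (hν : 0 < ν) (p q : ℕ) :
    ∫ z : ℂ, z ^ p * conj z ^ q * cexp (-ν * normSq z) =
      if p = q then (π * p ! / ν ^ (p + 1) : ℂ) else 0 := by
  split_ifs with hpq
  · rw [← hpq]
    exact integral_pow_mul_conj_pow_mul_gaussian_self hν p
  · exact integral_pow_mul_conj_pow_mul_radial_of_ne hpq fun r => cexp (-ν * r)

theorem integrable_pow_mul_conj_pow_mul_gaussian {ν : ℝ} (hν : 0 < ν) (p q : ℕ) :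
    Integrable fun z : ℂ => z ^ p * conj z ^ q * cexp (-ν * normSq z) := by
  have hbound : Integrable fun z : ℂ => ‖z‖ ^ (p + q) * Real.exp (-ν * ‖z‖ ^ 2) := by
    refine (integrable_fun_norm_addHaar volume
      (f := fun r => r ^ (p + q) * Real.exp (-ν * r ^ 2))).2 ?_
    have := integrableOn_rpow_mul_exp_neg_mul_sq hν
      (neg_one_lt_zero.trans_le (Nat.cast_nonneg (p + q + 1)))
    simp only [finrank_real_complex, Real.rpow_natCast] at this ⊢
    refine this.congr_fun (fun r _ => ?_) measurableSet_Ioi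
    simp only [smul_eq_mul]
    ring
  refine hbound.mono' (by fun_prop) (.of_forall fun z => le_of_eq ?_)
  rw [cexp_neg_mul_normSq_eq_ofReal, norm_mul, norm_mul, norm_pow, norm_pow, RCLike.norm_conj,
    norm_real, Real.norm_of_nonneg (Real.exp_pos _).le, pow_add]

noncomputable def gaussianInner (ν : ℝ) (f g : ℂ → ℂ) : ℂ :=
  ∫ z, f z * conj (g z) * cexp (-ν * normSq z)

theorem conj_gaussianInner (ν : ℝ) (f g : ℂ → ℂ) :
    conj (gaussianInner ν f g) = gaussianInner ν g f := by
  rw [gaussianInner, gaussianInner, ← integral_conj]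
  refine integral_congr_ae (.of_forall fun z => ?_)
  simp only [map_mul, conj_conj, ← Complex.exp_conj, map_neg, conj_ofReal]
  ring

theorem complexHermite_mul_conj_monomial_mul_gaussian (ν : ℝ) (m n a b : ℕ) (z : ℂ) :
    complexHermite ν m n z (conj z) * conj (z ^ a * conj z ^ b) * cexp (-ν * normSq z) =
      ∑ k ∈ range (m + 1), (complexHermiteCoeff ν m n k : ℂ) *
        (z ^ (m - k + b) * conj z ^ (n - k + a) * cexp (-ν * normSq z)) := by
  rw [complexHermite_eq_sum, sum_mul, sum_mul]
  refine sum_congr rfl fun k _ => ?_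
  simp only [map_mul, map_pow, conj_conj]
  ring

theorem integrable_complexHermite_mul_conj_monomial_mul_gaussian {ν : ℝ} (hν : 0 < ν)
    (m n a b : ℕ) :
    Integrable fun z =>
      complexHermite ν m n z (conj z) * conj (z ^ a * conj z ^ b) * cexp (-ν * normSq z) := by
  simp_rw [complexHermite_mul_conj_monomial_mul_gaussian]
  exact integrable_finsetSum _ fun k _ =>
    (integrable_pow_mul_conj_pow_mul_gaussian hν _ _).const_mul _

theorem gaussianInner_complexHermite_monomial_eq_sum {ν : ℝ} (hν : 0 < ν) (m n a b : ℕ) :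
    gaussianInner ν (fun z => complexHermite ν m n z (conj z)) (fun z => z ^ a * conj z ^ b) =
      ∑ k ∈ range (m + 1), (complexHermiteCoeff ν m n k : ℂ) *
        if m - k + b = n - k + a then (π * (m - k + b)! / ν ^ (m - k + b + 1) : ℂ) else 0 := by
  simp_rw [gaussianInner, complexHermite_mul_conj_monomial_mul_gaussian]
  rw [integral_finsetSum _ fun k _ =>
    (integrable_pow_mul_conj_pow_mul_gaussian hν _ _).const_mul _]
  simp_rw [integral_const_mul, integral_pow_mul_conj_pow_mul_gaussian hν]

theorem gaussianInner_complexHermite_monomial {ν : ℝ} (hν : 0 < ν) {m n a b : ℕ}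
    (hab : m + b = n + a) :
    gaussianInner ν (fun z => complexHermite ν m n z (conj z)) (fun z => z ^ a * conj z ^ b) =
      π * ν ^ n / ν ^ (b + 1) *
        ((∑ k ∈ range (m + 1), (-1 : ℤ) ^ k * m.choose k * n.descFactorial k * (n + a - k)! :
          ℤ) : ℂ) := by
  rw [gaussianInner_complexHermite_monomial_eq_sum hν]
  push_cast
  rw [mul_sum]
  refine sum_congr rfl fun k hk => ?_
  rcases le_or_gt k n with hkn | hnk
  · obtain ⟨j, rfl⟩ := Nat.exists_eq_add_of_le (Nat.lt_succ_iff.1 (mem_range.1 hk))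
    have hν0 : (ν : ℂ) ≠ 0 := ofReal_ne_zero.2 hν.ne'
    rw [if_pos (by omega), complexHermiteCoeff, show k + j - k + b = n + a - k by omega,
      show k + j + n - k = j + n by omega, show n + a - k = j + b by omega]
    push_cast
    field_simp
    ring
  · simp [complexHermiteCoeff, descFactorial_eq_zero_iff_lt.2 hnk]

theorem gaussianInner_complexHermite_monomial_of_ne {ν : ℝ} (hν : 0 < ν) {m n a b : ℕ}
    (hab : m + b ≠ n + a) :
    gaussianInner ν (fun z => complexHermite ν m n z (conj z)) (fun z => z ^ a * conj z ^ b) =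
      0 := by
  rw [gaussianInner_complexHermite_monomial_eq_sum hν]
  refine sum_eq_zero fun k hk => ?_
  rcases le_or_gt k n with hkn | hnk
  · rw [if_neg (by have := mem_range.1 hk; omega), mul_zero]
  · simp [complexHermiteCoeff, descFactorial_eq_zero_iff_lt.2 hnk]

theorem gaussianInner_complexHermite_monomial_of_lt {ν : ℝ} (hν : 0 < ν) {m n a b : ℕ}
    (h : a < m ∨ b < n) :
    gaussianInner ν (fun z => complexHermite ν m n z (conj z)) (fun z => z ^ a * conj z ^ b) =
      0 := by
  by_cases hab : m + b = n + a
  · rw [gaussianInner_complexHermite_monomial hν hab,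
      sum_alternating_choose_descFactorial_mul_factorial_of_lt (by omega) (by omega),
      Int.cast_zero, mul_zero]
  · exact gaussianInner_complexHermite_monomial_of_ne hν hab

theorem gaussianInner_complexHermite_monomial_self {ν : ℝ} (hν : 0 < ν) (m n : ℕ) :
    gaussianInner ν (fun z => complexHermite ν m n z (conj z)) (fun z => z ^ m * conj z ^ n) =
      π * m ! * n ! / ν := by
  rw [gaussianInner_complexHermite_monomial hν (add_comm m n),
    sum_alternating_choose_descFactorial_mul_factorial_self]
  have hν0 : (ν : ℂ) ≠ 0 := ofReal_ne_zero.2 hν.ne'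
  push_cast
  field_simp
  ring

theorem gaussianInner_complexHermite_eq_sum {ν : ℝ} (hν : 0 < ν) (m n m' n' : ℕ) :
    gaussianInner ν (fun z => complexHermite ν m n z (conj z))
        (fun z => complexHermite ν m' n' z (conj z)) =
      ∑ l ∈ range (m' + 1), (complexHermiteCoeff ν m' n' l : ℂ) *
        gaussianInner ν (fun z => complexHermite ν m n z (conj z))
          (fun z => z ^ (m' - l) * conj z ^ (n' - l)) := by
  have hpt (z : ℂ) : complexHermite ν m n z (conj z) *
      conj (complexHermite ν m' n' z (conj z)) * cexp (-ν * normSq z) =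
      ∑ l ∈ range (m' + 1), (complexHermiteCoeff ν m' n' l : ℂ) *
        (complexHermite ν m n z (conj z) * conj (z ^ (m' - l) * conj z ^ (n' - l)) *
          cexp (-ν * normSq z)) := by
    rw [complexHermite_eq_sum ν m' n', map_sum, mul_sum, sum_mul]
    refine sum_congr rfl fun l _ => ?_
    rw [mul_assoc _ (z ^ (m' - l)), map_mul, conj_ofReal]
    ring
  simp_rw [gaussianInner, hpt]
  rw [integral_finsetSum _ fun l _ =>
    (integrable_complexHermite_mul_conj_monomial_mul_gaussian hν _ _ _ _).const_mul _]
  simp_rw [integral_const_mul]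

theorem gaussianInner_complexHermite_of_not_le {ν : ℝ} (hν : 0 < ν) {m n m' n' : ℕ}
    (h : ¬(m ≤ m' ∧ n ≤ n')) :
    gaussianInner ν (fun z => complexHermite ν m n z (conj z))
      (fun z => complexHermite ν m' n' z (conj z)) = 0 := by
  rw [gaussianInner_complexHermite_eq_sum hν]
  refine sum_eq_zero fun l _ => ?_
  rw [gaussianInner_complexHermite_monomial_of_lt hν (by omega), mul_zero]

theorem gaussianInner_complexHermite_of_ne {ν : ℝ} (hν : 0 < ν) {m n m' n' : ℕ}
    (h : (m, n) ≠ (m', n')) :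
    gaussianInner ν (fun z => complexHermite ν m n z (conj z))
      (fun z => complexHermite ν m' n' z (conj z)) = 0 := by
  by_cases hle : m ≤ m' ∧ n ≤ n'
  · have hge : ¬(m' ≤ m ∧ n' ≤ n) := fun hge => h (by rw [le_antisymm hle.1 hge.1,
      le_antisymm hle.2 hge.2])
    rw [← conj_gaussianInner, gaussianInner_complexHermite_of_not_le hν hge, map_zero]
  · exact gaussianInner_complexHermite_of_not_le hν hle

theorem gaussianInner_complexHermite_self {ν : ℝ} (hν : 0 < ν) (m n : ℕ) :
    gaussianInner ν (fun z => complexHermite ν m n z (conj z))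
      (fun z => complexHermite ν m n z (conj z)) = π / ν * m ! * n ! * ν ^ (m + n) := by
  rw [gaussianInner_complexHermite_eq_sum hν, sum_eq_single 0]
  · simp only [complexHermiteCoeff, Nat.sub_zero, pow_zero, Nat.choose_zero_right,
      Nat.descFactorial_zero, gaussianInner_complexHermite_monomial_self hν]
    push_cast
    ring
  · intro l hl hl0
    rw [gaussianInner_complexHermite_monomial_of_lt hν
      (Or.inl (by have := mem_range.1 hl; omega)), mul_zero]
  · simp

theorem complexHermite_orthogonality (ν : ℝ) (hν : 0 < ν) (m n : ℕ) :
    (∫ z : ℂ, ‖complexHermite ν m n z (starRingEnd ℂ z)‖^2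
        * Real.exp (-ν * Complex.normSq z)
      = (Real.pi / ν) * (m.factorial : ℝ) * (n.factorial : ℝ) * ν^(m+n))
    ∧ ∀ m' n' : ℕ, (m, n) ≠ (m', n') →
      ∫ z : ℂ, complexHermite ν m n z (starRingEnd ℂ z)
          * starRingEnd ℂ (complexHermite ν m' n' z (starRingEnd ℂ z))
          * Complex.exp (-(ν : ℂ) * Complex.normSq z) = 0 := by
  refine ⟨?_, fun m' n' h => gaussianInner_complexHermite_of_ne hν h⟩
  have hpt (z : ℂ) :
      ((‖complexHermite ν m n z (conj z)‖ ^ 2 * Real.exp (-ν * normSq z) : ℝ) : ℂ) =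
        complexHermite ν m n z (conj z) * conj (complexHermite ν m n z (conj z)) *
        cexp (-ν * normSq z) := by
    rw [mul_conj, Complex.sq_norm]
    push_cast
    rfl
  apply ofReal_injective
  rw [← integral_complex_ofReal]
  simp_rw [hpt]
  exact (gaussianInner_complexHermite_self hν m n).trans (by push_cast; rfl)
end
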